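/- Let W ⊆ ℝ^d be a nonempty convex set with diameter at most D (D > 0), let n ≥ 1, let f₁, …, fₙ : ℝ^d → ℝ be convex differentiable functions with ‖∇f_i(w)‖ ≤ L₀ for all w ∈ W and all i, and set F = (1/n)∑_{i=1}^n f_i. Fix L₁ > 0, t ≥ 0, w₀ ∈ W, and step sizes η_k = D/(L₁√(k+1)). For each index sequence σ ∈ {1,…,n}^t define SGD iterates w₀^σ = w₀ and, for 0 ≤ k < t, let w_{k+1}^σ ∈ W satisfy ⟨w_k^σ − η_k ∇f_{σ_k}(w_k^σ) − w_{k+1}^σ, u − w_{k+1}^σ⟩ ≤ 0 for all u ∈ W, where w_{k+1}^σ depends only on σ₀, …, σ_k. Then for every j with 0 ≤ j ≤ t, the uniform average over all n^t index sequences satisfies (1/n^t) ∑_σ ∑_{k=j}^{t} ( F(w_k^σ) − F(w_j^σ) ) ≤ D(L₁² + 2L₀²)(√(t+1) − √j) / (2L₁). -/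

import Mathlib

/-!
Fix an index sequence `σ` and the anchor `u = w_j`. Convexity of `f_{σ_k}` and the projection
inequality give `‖w_{k+1} - u‖² ≤ ‖w_k - u‖² - 2 η_k (f_{σ_k}(w_k) - f_{σ_k}(u)) + η_k² L₀²`.
Dividing by `η_k` and summing by parts against the increasing weights `1 / η_k`, with
`‖w_k - u‖ ≤ D`, bounds `∑_{k=j}^{t-1} (f_{σ_k}(w_k) - f_{σ_k}(u))`; the last term
`F(w_t) - F(u)`, after which no step is taken, is at most `L₀ ‖w_t - u‖` and is absorbed by the
leftover `‖w_t - u‖² / η_{t-1}`. Since `w_k` and `w_j` do not depend on `σ_k`, averaging over `σ`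
replaces `f_{σ_k}` by `F`. For `η_k = D / (L₁ √(k+1))` the step-size sums telescope against
`1 / √(k+1) ≤ 2 (√(k+1) - √k)`.
-/

open Finset
open scoped BigOperators RealInnerProductSpace Fin.NatCast

theorem ConvexOn.add_le_of_hasFDerivAt {E : Type*} [NormedAddCommGroup E] [NormedSpace ℝ E]
    {s : Set E} {f : E → ℝ} {f' : E →L[ℝ] ℝ} {x y : E} (hf : ConvexOn ℝ s f) (hx : x ∈ s)
    (hy : y ∈ s) (hf' : HasFDerivAt f f' x) :
    f x + f' (y - x) ≤ f y := by
  set ℓ : ℝ →ᵃ[ℝ] E := AffineMap.lineMap x y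
  have hℓ0 : ℓ 0 = x := AffineMap.lineMap_apply_zero x y
  have hℓ1 : ℓ 1 = y := AffineMap.lineMap_apply_one x y
  have hline : ConvexOn ℝ (ℓ ⁻¹' s) (f ∘ ℓ) := hf.comp_affineMap ℓ
  have hderiv : HasDerivAt (f ∘ ℓ) (f' (y - x)) 0 :=
    (hℓ0 ▸ hf').comp_hasDerivAt 0 AffineMap.hasDerivAt_lineMap
  have := hline.le_slope_of_hasDerivAt (x := 0) (y := 1) (by simpa [hℓ0]) (by simpa [hℓ1])
    one_pos hderiv
  rw [slope_def_field, Function.comp_apply, Function.comp_apply, hℓ0, hℓ1] at this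
  linarith

theorem ConvexOn.add_inner_le_of_hasGradientAt {E : Type*} [NormedAddCommGroup E]
    [InnerProductSpace ℝ E] [CompleteSpace E] {s : Set E} {f : E → ℝ} {g x y : E}
    (hf : ConvexOn ℝ s f) (hx : x ∈ s) (hy : y ∈ s) (hg : HasGradientAt f g x) :
    f x + ⟪g, y - x⟫ ≤ f y :=
  hf.add_le_of_hasFDerivAt hx hy hg

theorem ConvexOn.sub_le_mul_norm_of_hasGradientAt {E : Type*} [NormedAddCommGroup E]
    [InnerProductSpace ℝ E] [CompleteSpace E] {s : Set E} {f : E → ℝ} {g x y : E} {L : ℝ}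
    (hf : ConvexOn ℝ s f) (hx : x ∈ s) (hy : y ∈ s) (hg : HasGradientAt f g x) (hL : ‖g‖ ≤ L) :
    f x - f y ≤ L * ‖x - y‖ := by
  have h := hf.add_inner_le_of_hasGradientAt hx hy hg
  have : ⟪g, x - y⟫ ≤ L * ‖x - y‖ :=
    (real_inner_le_norm _ _).trans (mul_le_mul_of_nonneg_right hL (norm_nonneg _))
  rw [← neg_sub x y, inner_neg_right] at h
  linarith

theorem norm_sub_sq_le_of_inner_sub_nonpos {E : Type*} [NormedAddCommGroup E]
    [InnerProductSpace ℝ E] {y p u : E} (h : ⟪y - p, u - p⟫ ≤ 0) :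
    ‖p - u‖ ^ 2 ≤ ‖y - u‖ ^ 2 := by
  have : ‖y - u‖ ^ 2 = ‖y - p‖ ^ 2 - 2 * ⟪y - p, u - p⟫ + ‖p - u‖ ^ 2 := by
    rw [← sub_add_sub_cancel y p u, norm_add_sq_real, ← neg_sub u p, inner_neg_right, norm_neg]
    ring
  nlinarith [sq_nonneg ‖y - p‖]

theorem ConvexOn.norm_sub_sq_le_of_projected_gradient_step {E : Type*} [NormedAddCommGroup E]
    [InnerProductSpace ℝ E] [CompleteSpace E] {s : Set E} {f : E → ℝ} {g x p u : E} {η L : ℝ}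
    (hf : ConvexOn ℝ s f) (hx : x ∈ s) (hu : u ∈ s) (hg : HasGradientAt f g x) (hL : ‖g‖ ≤ L)
    (hη : 0 ≤ η) (hp : ⟪x - η • g - p, u - p⟫ ≤ 0) :
    ‖p - u‖ ^ 2 ≤ ‖x - u‖ ^ 2 - 2 * η * (f x - f u) + η ^ 2 * L ^ 2 := by
  have hsub := hf.add_inner_le_of_hasGradientAt hx hu hg
  have hexpand : ‖x - η • g - u‖ ^ 2 = ‖x - u‖ ^ 2 - 2 * η * ⟪g, x - u⟫ + η ^ 2 * ‖g‖ ^ 2 := by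
    rw [sub_right_comm, norm_sub_sq_real, inner_smul_right, norm_smul, real_inner_comm,
      Real.norm_of_nonneg hη]
    ring
  have hg2 : ‖g‖ ^ 2 ≤ L ^ 2 := pow_le_pow_left₀ (norm_nonneg g) hL 2
  rw [← neg_sub x u, inner_neg_right] at hsub
  nlinarith [norm_sub_sq_le_of_inner_sub_nonpos hp, mul_le_mul_of_nonneg_left hg2 (sq_nonneg η)]

theorem sum_Ico_mul_sub_succ_add_le {a c : ℕ → ℝ} {B : ℝ} (hc : Monotone c) {j m : ℕ}
    (hjm : j ≤ m) (ha : ∀ k ∈ Ioc j m, a k ≤ B) :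
    ∑ k ∈ Ico j (m + 1), c k * (a k - a (k + 1)) + c m * a (m + 1) ≤
      c j * a j + B * (c m - c j) := by
  induction m, hjm using Nat.le_induction with
  | base =>
    rw [Nat.Ico_succ_singleton, sum_singleton, sub_self, mul_zero, add_zero]
    linarith [mul_sub (c j) (a j) (a (j + 1))]
  | succ m hjm ih =>
    have hm : a (m + 1) ≤ B := ha _ (mem_Ioc.2 ⟨by omega, le_rfl⟩)
    have ih := ih fun k hk => ha k (Ioc_subset_Ioc_right m.le_succ hk)
    rw [sum_Ico_succ_top (by omega)]
    nlinarith [hc m.le_succ]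

theorem suffix_sum_le_of_projected_gradient {E : Type*} [NormedAddCommGroup E]
    [InnerProductSpace ℝ E] [CompleteSpace E] {W s : Set E} {D L : ℝ}
    (hdiam : ∀ x ∈ W, ∀ y ∈ W, ‖x - y‖ ≤ D) (hWs : W ⊆ s)
    {h : ℕ → E → ℝ} {Φ : E → ℝ} {G x : ℕ → E} {η : ℕ → ℝ} (hη : ∀ k, 0 < η k) (hη_anti : Antitone η)
    {j m : ℕ} (hjm : j ≤ m) (hxW : ∀ k ∈ Icc j (m + 1), x k ∈ W)
    (hconv : ∀ k, ConvexOn ℝ s (h k)) (hgrad : ∀ k, HasGradientAt (h k) (G k) (x k))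
    (hG : ∀ k ∈ Ico j (m + 1), ‖G k‖ ≤ L)
    (hproj : ∀ k ∈ Ico j (m + 1), ⟪x k - η k • G k - x (k + 1), x j - x (k + 1)⟫ ≤ 0)
    (hΦ : Φ (x (m + 1)) - Φ (x j) ≤ L * ‖x (m + 1) - x j‖) :
    2 * (∑ k ∈ Ico j (m + 1), (h k (x k) - h k (x j)) + (Φ (x (m + 1)) - Φ (x j))) ≤
      D ^ 2 * ((η m)⁻¹ - (η j)⁻¹) + L ^ 2 * (∑ k ∈ Ico j (m + 1), η k + η m) := by
  set a : ℕ → ℝ := fun k => ‖x k - x j‖ ^ 2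
  have hxj : x j ∈ W := hxW j (mem_Icc.2 ⟨le_rfl, by omega⟩)
  have hstep : ∀ k ∈ Ico j (m + 1),
      2 * (h k (x k) - h k (x j)) ≤ (η k)⁻¹ * (a k - a (k + 1)) + L ^ 2 * η k := by
    intro k hk
    have hxk : x k ∈ W := hxW k (Ico_subset_Icc_self hk)
    have := (hconv k).norm_sub_sq_le_of_projected_gradient_step (hWs hxk) (hWs hxj)
      (hgrad k) (hG k hk) (hη k).le (hproj k hk)
    have hηk := hη k
    rw [← mul_le_mul_iff_of_pos_left hηk, mul_add, mul_inv_cancel_left₀ hηk.ne']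
    simp only [a]
    nlinarith
  have htel := sum_Ico_mul_sub_succ_add_le (a := a) (B := D ^ 2)
    (fun k l hkl => inv_anti₀ (hη l) (hη_anti hkl)) hjm fun k hk => by
      have hxk : x k ∈ W := hxW k (Ioc_subset_Icc_self (Ioc_subset_Ioc_right m.le_succ hk))
      exact pow_le_pow_left₀ (norm_nonneg _) (hdiam _ hxk _ hxj) 2
  -- AM-GM: `2 L r ≤ r² / η + L² η`
  have hlast : 2 * (Φ (x (m + 1)) - Φ (x j)) ≤ (η m)⁻¹ * a (m + 1) + L ^ 2 * η m := by
    set r := ‖x (m + 1) - x j‖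
    have hsq := mul_nonneg (inv_nonneg.2 (hη m).le) (sq_nonneg (r - L * η m))
    have hexp : (η m)⁻¹ * (r - L * η m) ^ 2 = (η m)⁻¹ * r ^ 2 - 2 * (L * r) + L ^ 2 * η m := by
      field_simp [(hη m).ne']
      ring
    simp only [a]
    linarith
  have hsum := sum_le_sum hstep
  rw [← mul_sum, sum_add_distrib, ← mul_sum] at hsum
  have haj : a j = 0 := by simp [a]
  rw [haj, mul_zero] at htel
  linarith

theorem Real.inv_sqrt_add_one_le_two_mul_sub {x : ℝ} (hx : 0 ≤ x) :
    (√(x + 1))⁻¹ ≤ 2 * (√(x + 1) - √x) := by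
  have hpos : 0 < √(x + 1) := Real.sqrt_pos.2 (by linarith)
  have hle : √x ≤ √(x + 1) := Real.sqrt_le_sqrt (by linarith)
  rw [inv_le_iff_one_le_mul₀ hpos]
  nlinarith [Real.sq_sqrt hx, Real.sq_sqrt (by linarith : 0 ≤ x + 1), Real.sqrt_nonneg x]

theorem Real.inv_sqrt_add_one_le_sqrt_add_two_sub {x : ℝ} (hx : 0 ≤ x) :
    (√(x + 1))⁻¹ ≤ √(x + 2) - √x := by
  have hpos : 0 < √(x + 1) := Real.sqrt_pos.2 (by linarith)
  have hx2 := Real.sq_sqrt (by linarith : 0 ≤ x + 2)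
  have hx1 := Real.sq_sqrt (by linarith : 0 ≤ x + 1)
  have hx0 := Real.sq_sqrt hx
  have hconc : √x + √(x + 2) ≤ 2 * √(x + 1) := by
    nlinarith [sq_nonneg (√x - √(x + 2)), Real.sqrt_nonneg x, Real.sqrt_nonneg (x + 2)]
  have hle : √x ≤ √(x + 2) := Real.sqrt_le_sqrt (by linarith)
  rw [inv_le_iff_one_le_mul₀ hpos]
  nlinarith [mul_le_mul_of_nonneg_left hconc (sub_nonneg.2 hle)]

theorem Real.sum_Ico_inv_sqrt_succ_le {j m : ℕ} (hjm : j ≤ m) :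
    ∑ k ∈ Ico j m, (√((k : ℝ) + 1))⁻¹ ≤ 2 * (√(m : ℝ) - √(j : ℝ)) := by
  induction m, hjm using Nat.le_induction with
  | base => simp
  | succ m hjm ih =>
    rw [sum_Ico_succ_top hjm, Nat.cast_succ]
    linarith [Real.inv_sqrt_add_one_le_two_mul_sub m.cast_nonneg]

theorem Real.sum_Ico_inv_sqrt_succ_add_le {j m : ℕ} (hjm : j ≤ m) :
    ∑ k ∈ Ico j (m + 1), (√((k : ℝ) + 1))⁻¹ + (√((m : ℝ) + 1))⁻¹ ≤
      2 * (√((m : ℝ) + 2) - √(j : ℝ)) := by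
  rw [sum_Ico_succ_top hjm]
  linarith [Real.sum_Ico_inv_sqrt_succ_le hjm,
    Real.inv_sqrt_add_one_le_sqrt_add_two_sub m.cast_nonneg]

theorem step_size_sum_le_of_eq_div_sqrt {D L₀ L₁ : ℝ} (hD : 0 < D) (hL₁ : 0 < L₁) {η : ℕ → ℝ}
    (hη : ∀ k : ℕ, η k = D / (L₁ * √((k : ℝ) + 1))) {j m : ℕ} (hjm : j ≤ m) :
    D ^ 2 * ((η m)⁻¹ - (η j)⁻¹) + L₀ ^ 2 * (∑ k ∈ Ico j (m + 1), η k + η m) ≤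
      D * (L₁ ^ 2 + 2 * L₀ ^ 2) * (√((m : ℝ) + 2) - √(j : ℝ)) / L₁ := by
  have hinv : ∀ k : ℕ, D ^ 2 * (η k)⁻¹ = D * L₁ * √((k : ℝ) + 1) := fun k => by
    rw [hη, inv_div]; field_simp
  have hη' : ∀ k : ℕ, η k = D / L₁ * (√((k : ℝ) + 1))⁻¹ := fun k => by
    rw [hη, div_mul_eq_div_div, div_eq_mul_inv (D / L₁)]
  have hsum : ∑ k ∈ Ico j (m + 1), η k + η m ≤ D / L₁ * (2 * (√((m : ℝ) + 2) - √(j : ℝ))) := by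
    simp only [hη', ← mul_sum, ← mul_add]
    exact mul_le_mul_of_nonneg_left (Real.sum_Ico_inv_sqrt_succ_add_le hjm) (by positivity)
  have hsqrt : √((m : ℝ) + 1) - √((j : ℝ) + 1) ≤ √((m : ℝ) + 2) - √(j : ℝ) := by
    linarith [Real.sqrt_le_sqrt (by linarith : (m : ℝ) + 1 ≤ m + 2),
      Real.sqrt_le_sqrt (by linarith : (j : ℝ) ≤ j + 1)]
  calc D ^ 2 * ((η m)⁻¹ - (η j)⁻¹) + L₀ ^ 2 * (∑ k ∈ Ico j (m + 1), η k + η m)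
      ≤ D * L₁ * (√((m : ℝ) + 2) - √(j : ℝ)) +
          L₀ ^ 2 * (D / L₁ * (2 * (√((m : ℝ) + 2) - √(j : ℝ)))) := by
        rw [mul_sub, hinv, hinv, ← mul_sub]
        gcongr
    _ = D * (L₁ ^ 2 + 2 * L₀ ^ 2) * (√((m : ℝ) + 2) - √(j : ℝ)) / L₁ := by
        field_simp

theorem Fintype.expect_eval_eq_expect_expect {ι α M : Type*} [Fintype ι] [DecidableEq ι]
    [Fintype α] [Nonempty α] [AddCommMonoid M] [Module ℚ≥0 M] (κ : ι) (φ : α → (ι → α) → M)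
    (hφ : ∀ a σ σ', (∀ i, i ≠ κ → σ i = σ' i) → φ a σ = φ a σ') :
    𝔼 σ : ι → α, φ (σ κ) σ = 𝔼 σ : ι → α, 𝔼 a, φ a σ := by
  set e := (Equiv.funSplitAt κ α).symm
  have he : ∀ a τ, e (a, τ) κ = a := fun a τ => by simp [e]
  have hφe : ∀ a b τ, φ a (e (b, τ)) = φ a (e (a, τ)) := fun a b τ =>
    hφ a _ _ fun i hi => by simp [e, hi]
  rw [expect_equiv e.symm _ (fun p => φ (e p κ) (e p)) (by simp),
    expect_equiv e.symm _ (fun p => 𝔼 a, φ a (e p)) (by simp), ← univ_product_univ,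
    expect_product, expect_product]
  simp only [he]
  calc 𝔼 a, 𝔼 τ, φ a (e (a, τ))
      = 𝔼 _b : α, 𝔼 τ, 𝔼 a, φ a (e (a, τ)) := by rw [expect_const, expect_comm]
    _ = 𝔼 b, 𝔼 τ, 𝔼 a, φ a (e (b, τ)) :=
        expect_congr rfl fun b _ => expect_congr rfl fun τ _ => expect_congr rfl fun a _ =>
          (hφe a b τ).symm

theorem eq_of_agree_below {α E : Type*} {t : ℕ} {w : (Fin t → α) → ℕ → E} {w₀ : E}
    (hw0 : ∀ σ, w σ 0 = w₀)
    (hdep : ∀ σ σ' k, k < t → (∀ i : Fin t, (i : ℕ) ≤ k → σ i = σ' i) → w σ (k + 1) = w σ' (k + 1))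
    (σ σ' : Fin t → α) (k : ℕ) (hσ : ∀ i : Fin t, (i : ℕ) < k → σ i = σ' i) :
    w σ k = w σ' k := by
  rcases k with _ | k
  · rw [hw0, hw0]
  by_cases hk : k < t
  · exact hdep σ σ' k hk fun i hi => hσ i (by omega)
  · rw [funext fun i => hσ i (by omega)]

theorem expect_sum_eval_sub_eq {E : Type*} {n t : ℕ} [NeZero n] [NeZero t]
    (f : Fin n → E → ℝ) (w : (Fin t → Fin n) → ℕ → E)
    (hw : ∀ σ σ' k, (∀ i : Fin t, (i : ℕ) < k → σ i = σ' i) → w σ k = w σ' k) (j : ℕ) :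
    𝔼 σ : Fin t → Fin n, ∑ k ∈ Ico j t, (f (σ k) (w σ k) - f (σ k) (w σ j)) =
      𝔼 σ : Fin t → Fin n, ∑ k ∈ Ico j t, 𝔼 i, (f i (w σ k) - f i (w σ j)) := by
  rw [expect_sum_comm, expect_sum_comm]
  refine sum_congr rfl fun k hk => ?_
  obtain ⟨hjk, hkt⟩ := mem_Ico.1 hk
  refine Fintype.expect_eval_eq_expect_expect (k : Fin t) (fun i σ => f i (w σ k) - f i (w σ j))
    fun i σ σ' hσ => ?_
  have hσ' : ∀ l ≤ k, ∀ i : Fin t, (i : ℕ) < l → σ i = σ' i := fun l hl i hi =>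
    hσ i (Fin.ne_of_val_ne (by rw [Fin.val_cast_of_lt hkt]; omega))
  simp only [hw σ σ' k (hσ' k le_rfl), hw σ σ' j (hσ' j hjk)]

theorem sgd_suffix_sum_bound_general
    {d : ℕ} {n : ℕ} (hn : 1 ≤ n)
    (W : Set (EuclideanSpace ℝ (Fin d)))
    (D : ℝ) (hD : 0 < D) (hdiam : ∀ w ∈ W, ∀ v ∈ W, ‖w - v‖ ≤ D)
    (f : Fin n → EuclideanSpace ℝ (Fin d) → ℝ)
    (g : Fin n → EuclideanSpace ℝ (Fin d) → EuclideanSpace ℝ (Fin d))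
    (hconv : ∀ i, ConvexOn ℝ Set.univ (f i))
    (hgrad : ∀ i x, HasGradientAt (f i) (g i x) x)
    (L₀ : ℝ) (hL₀ : ∀ i, ∀ x ∈ W, ‖g i x‖ ≤ L₀)
    (F : EuclideanSpace ℝ (Fin d) → ℝ)
    (hF : F = fun w => (n : ℝ)⁻¹ * ∑ i : Fin n, f i w)
    (L₁ : ℝ) (hL₁ : 0 < L₁) (t : ℕ)
    (w₀ : EuclideanSpace ℝ (Fin d)) (hw₀ : w₀ ∈ W)
    (η : ℕ → ℝ) (hη : ∀ k : ℕ, η k = D / (L₁ * Real.sqrt (k + 1)))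
    (w : (Fin t → Fin n) → ℕ → EuclideanSpace ℝ (Fin d))
    (hw0 : ∀ σ, w σ 0 = w₀)
    (hmem : ∀ σ k, k < t → w σ (k + 1) ∈ W)
    (hproj : ∀ (σ : Fin t → Fin n) (k : ℕ) (hk : k < t), ∀ u ∈ W,
      ⟪w σ k - η k • g (σ ⟨k, hk⟩) (w σ k) - w σ (k + 1), u - w σ (k + 1)⟫ ≤ 0)
    (hdep : ∀ (σ σ' : Fin t → Fin n) (k : ℕ), k < t →
      (∀ j : Fin t, (j : ℕ) ≤ k → σ j = σ' j) → w σ (k + 1) = w σ' (k + 1)) :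
    ∀ j : ℕ, j ≤ t →
      ((n : ℝ) ^ t)⁻¹ *
          ∑ σ : Fin t → Fin n, ∑ k ∈ Finset.Icc j t, (F (w σ k) - F (w σ j)) ≤
        D * (L₁ ^ 2 + 2 * L₀ ^ 2) * (Real.sqrt (t + 1) - Real.sqrt j) / (2 * L₁) := by
  intro j hj
  rcases hj.eq_or_lt with rfl | hjt
  · simp only [Icc_self, sum_singleton, sub_self, sum_const_zero, mul_zero]
    have := Real.sqrt_le_sqrt (by linarith : (j : ℝ) ≤ j + 1)
    exact div_nonneg (mul_nonneg (by positivity) (by linarith)) (by positivity)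
  obtain ⟨m, rfl⟩ : ∃ m, t = m + 1 := ⟨t - 1, by omega⟩
  have : NeZero n := ⟨by omega⟩
  have hwW : ∀ σ k, k ≤ m + 1 → w σ k ∈ W := by
    rintro σ (_ | k) hk
    exacts [hw0 σ ▸ hw₀, hmem σ k (by omega)]
  have hFexp : ∀ x y, F x - F y = 𝔼 i, (f i x - f i y) := fun x y => by
    rw [Fintype.expect_eq_sum_div_card, sum_sub_distrib, hF, Fintype.card_fin]
    ring
  have hηpos : ∀ k, 0 < η k := fun k => hη k ▸ by positivity
  have hηanti : Antitone η := fun k l hkl => by rw [hη, hη]; gcongr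
  have hpath : ∀ σ : Fin (m + 1) → Fin n,
      2 * (∑ k ∈ Ico j (m + 1), (f (σ k) (w σ k) - f (σ k) (w σ j)) +
        (F (w σ (m + 1)) - F (w σ j))) ≤
      D * (L₁ ^ 2 + 2 * L₀ ^ 2) * (√((m : ℝ) + 2) - √(j : ℝ)) / L₁ := fun σ => by
    have hproj_anchor : ∀ k ∈ Ico j (m + 1),
        ⟪w σ k - η k • g (σ k) (w σ k) - w σ (k + 1), w σ j - w σ (k + 1)⟫ ≤ 0 := fun k hk => by
      have hk' := (mem_Ico.1 hk).2
      simpa [Fin.natCast_eq_mk hk'] using hproj σ k hk' _ (hwW σ j (by omega))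
    have hlast : F (w σ (m + 1)) - F (w σ j) ≤ L₀ * ‖w σ (m + 1) - w σ j‖ :=
      hFexp _ _ ▸ expect_le univ_nonempty fun i _ =>
        (hconv i).sub_le_mul_norm_of_hasGradientAt (Set.mem_univ _) (Set.mem_univ _)
          (hgrad i _) (hL₀ i _ (hwW σ _ le_rfl))
    exact (suffix_sum_le_of_projected_gradient hdiam (Set.subset_univ W) hηpos hηanti (by omega)
      (fun k hk => hwW σ k (mem_Icc.1 hk).2) (fun k => hconv (σ k)) (fun k => hgrad (σ k) _)
      (fun k hk => hL₀ _ _ (hwW σ k (mem_Ico.1 hk).2.le)) hproj_anchor hlast).trans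
      (step_size_sum_le_of_eq_div_sqrt hD hL₁ hη (by omega))
  have hcard : (Fintype.card (Fin (m + 1) → Fin n) : ℝ) = n ^ (m + 1) := by simp
  rw [inv_mul_eq_div, ← hcard, ← Fintype.expect_eq_sum_div_card,
    show ((m + 1 : ℕ) : ℝ) + 1 = m + 2 by push_cast; ring]
  calc 𝔼 σ : Fin (m + 1) → Fin n, ∑ k ∈ Icc j (m + 1), (F (w σ k) - F (w σ j))
      = 𝔼 σ : Fin (m + 1) → Fin n, (∑ k ∈ Ico j (m + 1), (f (σ k) (w σ k) - f (σ k) (w σ j)) +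
          (F (w σ (m + 1)) - F (w σ j))) := by
        simp only [← Ico_add_one_right_eq_Icc, sum_Ico_succ_top hjt.le, expect_add_distrib,
          expect_sum_eval_sub_eq f w (eq_of_agree_below hw0 hdep), hFexp]
    _ ≤ _ := expect_le univ_nonempty fun σ _ => by
        rw [mul_comm 2 L₁, ← div_div]
        linarith [hpath σ]

/-- Suffix-sum bound for projected SGD (in expectation over the uniformly random index
sequences): the average over index sequences of `∑_{k=j}^{t} (F(w_k) − F(w_j))` is at
most `D (L₁² + 2L₀²)(√(t+1) − √j) / (2 L₁)`. -/
theorem sgd_suffix_sum_bound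
    {d : ℕ} {n : ℕ} (hn : 1 ≤ n)
    (W : Set (EuclideanSpace ℝ (Fin d))) (hW : Convex ℝ W) (hWne : W.Nonempty)
    (D : ℝ) (hD : 0 < D) (hdiam : ∀ w ∈ W, ∀ v ∈ W, ‖w - v‖ ≤ D)
    (f : Fin n → EuclideanSpace ℝ (Fin d) → ℝ)
    (g : Fin n → EuclideanSpace ℝ (Fin d) → EuclideanSpace ℝ (Fin d))
    (hconv : ∀ i, ConvexOn ℝ Set.univ (f i))
    (hgrad : ∀ i x, HasGradientAt (f i) (g i x) x)
    (L₀ : ℝ) (hL₀ : ∀ i, ∀ x ∈ W, ‖g i x‖ ≤ L₀)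
    (F : EuclideanSpace ℝ (Fin d) → ℝ)
    (hF : F = fun w => (n : ℝ)⁻¹ * ∑ i : Fin n, f i w)
    (L₁ : ℝ) (hL₁ : 0 < L₁) (t : ℕ)
    (w₀ : EuclideanSpace ℝ (Fin d)) (hw₀ : w₀ ∈ W)
    (η : ℕ → ℝ) (hη : ∀ k : ℕ, η k = D / (L₁ * Real.sqrt (k + 1)))
    (w : (Fin t → Fin n) → ℕ → EuclideanSpace ℝ (Fin d))
    (hw0 : ∀ σ, w σ 0 = w₀)
    (hmem : ∀ σ k, k < t → w σ (k + 1) ∈ W)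
    (hproj : ∀ (σ : Fin t → Fin n) (k : ℕ) (hk : k < t), ∀ u ∈ W,
      ⟪w σ k - η k • g (σ ⟨k, hk⟩) (w σ k) - w σ (k + 1), u - w σ (k + 1)⟫ ≤ 0)
    (hdep : ∀ (σ σ' : Fin t → Fin n) (k : ℕ), k < t →
      (∀ j : Fin t, (j : ℕ) ≤ k → σ j = σ' j) → w σ (k + 1) = w σ' (k + 1)) :
    ∀ j : ℕ, j ≤ t →
      ((n : ℝ) ^ t)⁻¹ *
          ∑ σ : Fin t → Fin n, ∑ k ∈ Finset.Icc j t, (F (w σ k) - F (w σ j)) ≤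
        D * (L₁ ^ 2 + 2 * L₀ ^ 2) * (Real.sqrt (t + 1) - Real.sqrt j) / (2 * L₁) :=
  sgd_suffix_sum_bound_general hn W D hD hdiam f g hconv hgrad L₀ hL₀ F hF L₁ hL₁ t w₀ hw₀ η hη w
    hw0 hmem hproj hdep
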